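/- With Φ and Ψ as defined: if τ and τ' are assignments satisfying Ψ that are connected in G(Ψ), then their restrictions to V satisfy Φ and are connected in G(Φ). -/
import Mathlib


/-- Two satisfying assignments of `Φ` are connected in `G(Φ)`: there is a finite
sequence of assignments satisfying `Φ` from the first to the second in which
consecutive assignments differ in the value of exactly one variable. -/
def ConnectedIn {X : Type*} (Φ : (X → Bool) → Prop) (a b : X → Bool) : Prop :=
  ∃ (n : ℕ) (f : ℕ → X → Bool), f 0 = a ∧ f n = b ∧ (∀ i ≤ n, Φ (f i)) ∧
    ∀ i < n, ∃! x : X, f i x ≠ f (i + 1) x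

variable {V : Type*}

/-- The formula `Φ`: `Φ₀` together with the clause `x ∨ y ∨ z`. -/
def PhiCl (Φ₀ : (V → Bool) → Prop) (x y z : V) (σ : V → Bool) : Prop :=
  Φ₀ σ ∧ (σ x = true ∨ σ y = true ∨ σ z = true)

/-- The formula `Ψ` on the extended variable set `V ⊕ Fin 3` (the fresh variables
`a`, `b`, `c` are `Sum.inr 0`, `Sum.inr 1`, `Sum.inr 2`): `Φ₀` on the restriction,
the implications `a → x`, `b → y`, `c → z`, and the clause `a ∨ b ∨ c`. -/
def PsiCl (Φ₀ : (V → Bool) → Prop) (x y z : V) (τ : V ⊕ Fin 3 → Bool) : Prop :=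
  Φ₀ (τ ∘ Sum.inl) ∧
    (τ (Sum.inr 0) = true → τ (Sum.inl x) = true) ∧
    (τ (Sum.inr 1) = true → τ (Sum.inl y) = true) ∧
    (τ (Sum.inr 2) = true → τ (Sum.inl z) = true) ∧
    (τ (Sum.inr 0) = true ∨ τ (Sum.inr 1) = true ∨ τ (Sum.inr 2) = true)

/-- The canonical extension of `σ : V → Bool` to `V ⊕ Fin 3`, assigning to the fresh
variables `a`, `b`, `c` the values `σ x`, `σ y`, `σ z` respectively. -/
def extAssign (x y z : V) (σ : V → Bool) : V ⊕ Fin 3 → Bool :=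
  Sum.elim σ ![σ x, σ y, σ z]

lemma psi_restrict (Φ₀ : (V → Bool) → Prop) (x y z : V) (τ : V ⊕ Fin 3 → Bool)
    (h : PsiCl Φ₀ x y z τ) : PhiCl Φ₀ x y z (τ ∘ Sum.inl) := by
  obtain ⟨h0, ha, hb, hc, habc⟩ := h
  refine ⟨h0, ?_⟩
  rcases habc with h | h | h
  · exact Or.inl (ha h)
  · exact Or.inr (Or.inl (hb h))
  · exact Or.inr (Or.inr (hc h))

lemma connectedIn_refl {X : Type*} (Φ : (X → Bool) → Prop) (a : X → Bool) (h : Φ a) :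
    ConnectedIn Φ a a :=
  ⟨0, fun _ => a, rfl, rfl, fun _ _ => h, fun i hi => absurd hi (Nat.not_lt_zero i)⟩

lemma connectedIn_extend {X : Type*} {Φ : (X → Bool) → Prop} {a b c : X → Bool}
    (h : ConnectedIn Φ a b) (hc : Φ c) (hbc : ∃! x : X, b x ≠ c x) :
    ConnectedIn Φ a c := by
  obtain ⟨n, f, h0, hn, hsat, hdiff⟩ := h
  refine ⟨n + 1, fun i => if i ≤ n then f i else c, by simp [h0], by simp, ?_, ?_⟩
  · intro i hi
    by_cases h' : i ≤ n
    · simpa [h'] using hsat i h'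
    · simpa [h'] using hc
  · intro i hi
    rcases Nat.lt_or_ge i n with h' | h'
    · have h1 : i ≤ n := le_of_lt h'
      have h2 : i + 1 ≤ n := h'
      simpa [h1, h2] using hdiff i h'
    · have : i = n := le_antisymm (Nat.lt_succ_iff.mp hi) h'
      subst this
      simpa [hn] using hbc

lemma restrict_step (x y z : V) (f : ℕ → V ⊕ Fin 3 → Bool) (i : ℕ)
    (h : ∃! w : V ⊕ Fin 3, f i w ≠ f (i + 1) w) :
    (f i ∘ Sum.inl = f (i + 1) ∘ Sum.inl) ∨
      ∃! v : V, (f i ∘ Sum.inl) v ≠ (f (i + 1) ∘ Sum.inl) v := by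
  obtain ⟨w, hw, huniq⟩ := h
  cases w with
  | inl v =>
    right
    refine ⟨v, hw, fun v' hv' => ?_⟩
    have := huniq (Sum.inl v') hv'
    exact Sum.inl.inj this
  | inr j =>
    left
    funext v
    by_contra hne
    have := huniq (Sum.inl v) hne
    simp at this

theorem stmt_18 (Φ₀ : (V → Bool) → Prop) (x y z : V)
    (hxy : x ≠ y) (hxz : x ≠ z) (hyz : y ≠ z)
    (τ τ' : V ⊕ Fin 3 → Bool) (hτ : PsiCl Φ₀ x y z τ) (hτ' : PsiCl Φ₀ x y z τ')
    (hconn : ConnectedIn (PsiCl Φ₀ x y z) τ τ') :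
    PhiCl Φ₀ x y z (τ ∘ Sum.inl) ∧ PhiCl Φ₀ x y z (τ' ∘ Sum.inl) ∧
      ConnectedIn (PhiCl Φ₀ x y z) (τ ∘ Sum.inl) (τ' ∘ Sum.inl) := by
  refine ⟨psi_restrict _ _ _ _ _ hτ, psi_restrict _ _ _ _ _ hτ', ?_⟩
  obtain ⟨n, f, h0, hn, hsat, hdiff⟩ := hconn
  subst h0; subst hn
  have key : ∀ m ≤ n, ConnectedIn (PhiCl Φ₀ x y z) (f 0 ∘ Sum.inl) (f m ∘ Sum.inl) := by
    intro m hm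
    induction m with
    | zero =>
      exact connectedIn_refl _ _ (psi_restrict _ _ _ _ _ (hsat 0 (Nat.zero_le _)))
    | succ k ih =>
      have hk : k ≤ n := le_of_lt hm
      have ihk := ih hk
      rcases restrict_step x y z f k (hdiff k hm) with heq | hstep
      · rwa [heq] at ihk
      · exact connectedIn_extend ihk (psi_restrict _ _ _ _ _ (hsat (k + 1) hm)) hstep
  exact key n le_rfl
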